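/- Suppose the preference over menus is represented by V(φ_F) = max_{π∈Π(p₀)} ∫(φ_F − ψ) dπ for convex ψ, and suppose for every menu F the set Λ_F of optimal supporting hyperplane slopes is a singleton (unique hyperplane property). Then Independence of Irrelevant Alternatives holds: if V(φ_F) = V(φ_{F∩G}) = V(φ_G), then V(φ_{F∪G}) = V(φ_F). -/

import Mathlib

open Finset

/-- Euclidean dot product on `ℝ^M`. -/
def dotp {M : ℕ} (a b : Fin M → ℝ) : ℝ := ∑ j, a j * b j

/-- The subdifferential of `ψ` at `y`, relative to the domain `Y`. -/
def subdiff {M : ℕ} (Y : Set (Fin M → ℝ)) (ψ : (Fin M → ℝ) → ℝ) (y : Fin M → ℝ) :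
    Set (Fin M → ℝ) :=
  {l | ∀ q ∈ Y, dotp l (q - y) ≤ ψ q - ψ y}

/-- A finitely supported probability distribution over posteriors `y ∈ Y ⊆ ℝ^M`
with barycenter `x₀` (an element of `Π(p̄₀)` after translation to `ℝ^M`). -/
structure DistOn {M : ℕ} (Y : Set (Fin M → ℝ)) (x₀ : Fin M → ℝ) where
  w : (Fin M → ℝ) →₀ ℝ
  nonneg : ∀ p, 0 ≤ w p
  total : w.sum (fun _ x => x) = 1
  supp : ∀ p ∈ w.support, p ∈ Y
  bary : w.sum (fun p x => x • p) = x₀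

/-- Expected value of `f` under a distribution over posteriors. -/
def eValM {M : ℕ} {Y : Set (Fin M → ℝ)} {x₀ : Fin M → ℝ} (π : DistOn Y x₀)
    (f : (Fin M → ℝ) → ℝ) : ℝ :=
  π.w.sum (fun p x => x * f p)

/-- `φ_F` for a menu `F` of acts with affine utilities `q ↦ a·q + b`, `(a, b) ∈ F`. -/
noncomputable def phiMenuM {M : ℕ} (F : Finset ((Fin M → ℝ) × ℝ)) (q : Fin M → ℝ) : ℝ :=
  sSup ((fun ab => dotp ab.1 q + ab.2) '' (F : Set ((Fin M → ℝ) × ℝ)))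

/-- `Λ_F`: the set of slopes of optimal supporting hyperplanes of `N*_F = φ_F − ψ̄`
through `(x₀, v)`, where `v = V(φ_F)`. -/
def Lam {M : ℕ} (Y : Set (Fin M → ℝ)) (ψ : (Fin M → ℝ) → ℝ) (x₀ : Fin M → ℝ)
    (F : Finset ((Fin M → ℝ) × ℝ)) (v : ℝ) : Set (Fin M → ℝ) :=
  {l | ∀ y ∈ Y, phiMenuM F y - ψ y ≤ dotp l (y - x₀) + v}

/-!
Shrinking a menu only lowers `φ`, so an optimal supporting slope of `F` (or of `G`) at the
common value `V(F ∩ G)` also supports `F ∩ G`; by uniqueness the two slopes coincide. A slope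
supporting both `φ_F − ψ` and `φ_G − ψ` supports their maximum, which dominates `φ_{F∪G} − ψ`.
Integrating this affine bound against an optimal distribution for `F ∪ G` only sees its value
at the barycenter, so `V(F ∪ G) ≤ V(F)`; the reverse inequality is monotonicity of `V`.
-/

section Menus

variable {M : ℕ}

lemma dotp_eq_dotProduct (a b : Fin M → ℝ) : dotp a b = a ⬝ᵥ b := rfl

lemma phiMenuM_mono {F G : Finset ((Fin M → ℝ) × ℝ)} (hF : F.Nonempty) (h : F ⊆ G)
    (y : Fin M → ℝ) : phiMenuM F y ≤ phiMenuM G y :=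
  csSup_le_csSup (G.finite_toSet.image _).bddAbove (hF.to_set.image _)
    (Set.image_mono (mod_cast h))

lemma phiMenuM_union_le {F G : Finset ((Fin M → ℝ) × ℝ)} (hF : F.Nonempty)
    (y : Fin M → ℝ) : phiMenuM (F ∪ G) y ≤ max (phiMenuM F y) (phiMenuM G y) := by
  apply csSup_le ((hF.mono subset_union_left).to_set.image _)
  rintro x ⟨ab, hab, rfl⟩
  rcases mem_union.1 (mod_cast hab) with h | h
  · exact le_max_of_le_left (le_csSup (F.finite_toSet.image _).bddAbove ⟨ab, h, rfl⟩)
  · exact le_max_of_le_right (le_csSup (G.finite_toSet.image _).bddAbove ⟨ab, h, rfl⟩)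

end Menus

section Expectation

variable {M : ℕ} {Y : Set (Fin M → ℝ)} {x₀ : Fin M → ℝ}

lemma eValM_mono (π : DistOn Y x₀) {f g : (Fin M → ℝ) → ℝ} (h : ∀ p ∈ Y, f p ≤ g p) :
    eValM π f ≤ eValM π g :=
  sum_le_sum fun p hp => mul_le_mul_of_nonneg_left (h p (π.supp p hp)) (π.nonneg p)

lemma eValM_dotp (π : DistOn Y x₀) (l : Fin M → ℝ) :
    eValM π (fun q => dotp l q) = dotp l x₀ := by
  conv_rhs => rw [← π.bary]
  simp only [eValM, Finsupp.sum, dotp_eq_dotProduct, dotProduct_sum, dotProduct_smul,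
    smul_eq_mul]

lemma eValM_affine (π : DistOn Y x₀) (l : Fin M → ℝ) (v : ℝ) :
    eValM π (fun q => dotp l (q - x₀) + v) = v := by
  have htotal : ∑ p ∈ π.w.support, π.w p = 1 := π.total
  have hdotp := eValM_dotp π l
  simp only [eValM, Finsupp.sum, dotp_eq_dotProduct] at hdotp ⊢
  simp only [dotProduct_sub, mul_add, mul_sub, sum_add_distrib, sum_sub_distrib,
    ← sum_mul, htotal, hdotp]
  ring

end Expectation

section SupportingHyperplanes

variable {M : ℕ} {Y : Set (Fin M → ℝ)} {ψ : (Fin M → ℝ) → ℝ} {x₀ : Fin M → ℝ}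
  {F G : Finset ((Fin M → ℝ) × ℝ)} {l : Fin M → ℝ} {v : ℝ}

lemma eValM_le_of_mem_Lam (π : DistOn Y x₀) (hl : l ∈ Lam Y ψ x₀ F v) :
    eValM π (fun q => phiMenuM F q - ψ q) ≤ v :=
  (eValM_mono π hl).trans_eq (eValM_affine π l v)

lemma Lam_anti (hF : F.Nonempty) (h : F ⊆ G) : Lam Y ψ x₀ G v ⊆ Lam Y ψ x₀ F v :=
  fun _ hl y hy => (sub_le_sub_right (phiMenuM_mono hF h y) _).trans (hl y hy)

lemma mem_Lam_union (hF : F.Nonempty) (hlF : l ∈ Lam Y ψ x₀ F v)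
    (hlG : l ∈ Lam Y ψ x₀ G v) : l ∈ Lam Y ψ x₀ (F ∪ G) v := fun y hy =>
  calc phiMenuM (F ∪ G) y - ψ y ≤ max (phiMenuM F y) (phiMenuM G y) - ψ y :=
        sub_le_sub_right (phiMenuM_union_le hF y) _
    _ = max (phiMenuM F y - ψ y) (phiMenuM G y - ψ y) := (max_sub_sub_right ..).symm
    _ ≤ dotp l (y - x₀) + v := max_le (hlF y hy) (hlG y hy)

end SupportingHyperplanes

lemma value_mono {M : ℕ} {Y : Set (Fin M → ℝ)} {ψ : (Fin M → ℝ) → ℝ} {x₀ : Fin M → ℝ}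
    {F G : Finset ((Fin M → ℝ) × ℝ)} {vF vG : ℝ} (hF : F.Nonempty) (h : F ⊆ G)
    (hvF : ∃ π : DistOn Y x₀, eValM π (fun q => phiMenuM F q - ψ q) = vF)
    (hvG : ∀ π : DistOn Y x₀, eValM π (fun q => phiMenuM G q - ψ q) ≤ vG) : vF ≤ vG := by
  obtain ⟨π, rfl⟩ := hvF
  exact (eValM_mono π fun p _ => sub_le_sub_right (phiMenuM_mono hF h p) _).trans (hvG π)

theorem stmt11_general {M : ℕ} (Y : Set (Fin M → ℝ)) (ψ : (Fin M → ℝ) → ℝ)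
    (x₀ : Fin M → ℝ) (V : Finset ((Fin M → ℝ) × ℝ) → ℝ)
    (hrep : ∀ F : Finset ((Fin M → ℝ) × ℝ), F.Nonempty →
      (∀ π : DistOn Y x₀, eValM π (fun q => phiMenuM F q - ψ q) ≤ V F) ∧
      (∃ π : DistOn Y x₀, eValM π (fun q => phiMenuM F q - ψ q) = V F))
    (hUHP : ∀ F : Finset ((Fin M → ℝ) × ℝ), F.Nonempty → ∃! l, l ∈ Lam Y ψ x₀ F (V F)) :
    ∀ F G : Finset ((Fin M → ℝ) × ℝ), (F ∩ G).Nonempty →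
      V F = V (F ∩ G) → V G = V (F ∩ G) → V (F ∪ G) = V F := by
  intro F G hFG hVF hVG
  have hF : F.Nonempty := hFG.mono inter_subset_left
  have hG : G.Nonempty := hFG.mono inter_subset_right
  have hFuG : (F ∪ G).Nonempty := hF.mono subset_union_left
  obtain ⟨lF, hlF, -⟩ := hUHP F hF
  obtain ⟨lG, hlG, -⟩ := hUHP G hG
  rw [hVF] at hlF
  rw [hVG] at hlG
  have hl : lF = lG := (hUHP (F ∩ G) hFG).unique
    (Lam_anti hFG inter_subset_left hlF) (Lam_anti hFG inter_subset_right hlG)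
  subst hl
  have hlU : lF ∈ Lam Y ψ x₀ (F ∪ G) (V (F ∩ G)) := mem_Lam_union hF hlF hlG
  obtain ⟨π, hπ⟩ := (hrep (F ∪ G) hFuG).2
  refine le_antisymm ?_ (value_mono hF subset_union_left (hrep F hF).2 (hrep (F ∪ G) hFuG).1)
  calc V (F ∪ G) = eValM π (fun q => phiMenuM (F ∪ G) q - ψ q) := hπ.symm
    _ ≤ V (F ∩ G) := eValM_le_of_mem_Lam π hlU
    _ = V F := hVF.symm

/-- if the value of every menu is represented by
`V(φ_F) = max_π ∫(φ_F − ψ) dπ` and every menu has a unique optimal supporting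
hyperplane, then Independence of Irrelevant Alternatives holds. -/
theorem stmt11 {M : ℕ} (Y : Set (Fin M → ℝ)) (ψ : (Fin M → ℝ) → ℝ)
    (hconv : ConvexOn ℝ Y ψ) (x₀ : Fin M → ℝ) (hx₀ : x₀ ∈ Y)
    (V : Finset ((Fin M → ℝ) × ℝ) → ℝ)
    (hrep : ∀ F : Finset ((Fin M → ℝ) × ℝ), F.Nonempty →
      (∀ π : DistOn Y x₀, eValM π (fun q => phiMenuM F q - ψ q) ≤ V F) ∧
      (∃ π : DistOn Y x₀, eValM π (fun q => phiMenuM F q - ψ q) = V F))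
    (hUHP : ∀ F : Finset ((Fin M → ℝ) × ℝ), F.Nonempty → ∃! l, l ∈ Lam Y ψ x₀ F (V F)) :
    ∀ F G : Finset ((Fin M → ℝ) × ℝ), (F ∩ G).Nonempty →
      V F = V (F ∩ G) → V G = V (F ∩ G) → V (F ∪ G) = V F :=
  stmt11_general Y ψ x₀ V hrep hUHP
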